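/- Let k ≥ 2 and let Γ_k be the graph on [3]^k whose edges are the pairs {x,y} of distinct tuples with |x_(i) − y_(i)| ≤ 1 for every i ∈ [k]. For any graph H2 on [3]^k with K̄_[k]∘H2 ∈ C_k, one has |E(H2)| ≤ (7^k − 3^k)/2, with equality if and only if H2 = Γ_k. -/

import Mathlib

open SimpleGraph

/-- `w` enumerates a `(k, m)`-completeness-resolving set of `G`:
`w` is injective, its range `W` is a proper subset of the vertex set, and the map
`u ↦ (dist (w 1) u, …, dist (w k) u)` is a bijection from `V ∖ W` onto `[m]^k`. -/
def IsCRS {V : Type*} (G : SimpleGraph V) {k : ℕ} (w : Fin k → V) (m : ℕ) : Prop :=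
  Function.Injective w ∧ Set.range w ≠ Set.univ ∧
    Function.Injective
      (fun u : {u : V // u ∉ Set.range w} => fun i : Fin k => G.dist (w i) u.1) ∧
    Set.range (fun u : {u : V // u ∉ Set.range w} => fun i : Fin k => G.dist (w i) u.1) =
      {x : Fin k → ℕ | ∀ i, 1 ≤ x i ∧ x i ≤ m}

/-- `G` is a `(k, m)`-completeness-resolvable graph. -/
def IsCRG {V : Type*} (G : SimpleGraph V) (k m : ℕ) : Prop :=
  ∃ w : Fin k → V, IsCRS G w m

/-- `G` is completeness-resolvable. -/
def CompletenessResolvable {V : Type*} (G : SimpleGraph V) : Prop :=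
  ∃ (k m : ℕ) (w : Fin k → V), IsCRS G w m

/-! ### The family `B_k`.
Tuples in `[2]^k` are modelled as functions `Fin k → Fin 2`, the `Fin 2`-value `j`
corresponding to the entry `j + 1 ∈ {1, 2}`. -/

/-- The graph `H1 ∘ H2` on `[k] ⊔ [2]^k`. -/
def comp2 {k : ℕ} (H1 : SimpleGraph (Fin k)) (H2 : SimpleGraph (Fin k → Fin 2)) :
    SimpleGraph (Fin k ⊕ (Fin k → Fin 2)) where
  Adj a b :=
    match a, b with
    | Sum.inl i, Sum.inl j => H1.Adj i j
    | Sum.inr x, Sum.inr y => H2.Adj x y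
    | Sum.inl i, Sum.inr x => x i = 0
    | Sum.inr x, Sum.inl i => x i = 0
  symm := by
    refine ⟨?_⟩
    rintro (i | x) (j | y) h
    · exact H1.adj_symm h
    · exact h
    · exact h
    · exact H2.adj_symm h
  loopless := by
    refine ⟨?_⟩
    rintro (i | x) h
    · exact H1.ne_of_adj h rfl
    · exact H2.ne_of_adj h rfl

/-- The defining condition of `B_k`: for each `i`, the edges of `H2` lying in the complete
bipartite graph `B_i^k` (i.e. joining a tuple with `i`-th entry `1` to one with `i`-th entry `2`)
cover every tuple all of whose entries on the closed neighbourhood of `i` in `H1` equal `2`. -/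
def BCond {k : ℕ} (H1 : SimpleGraph (Fin k)) (H2 : SimpleGraph (Fin k → Fin 2)) : Prop :=
  ∀ (i : Fin k) (x : Fin k → Fin 2),
    (∀ j : Fin k, (j = i ∨ H1.Adj i j) → x j = 1) →
    ∃ y : Fin k → Fin 2, H2.Adj x y ∧ y i ≠ x i

/-- The family `B_k`, as a set of graphs on `[k] ⊔ [2]^k`. -/
def Bset (k : ℕ) : Set (SimpleGraph (Fin k ⊕ (Fin k → Fin 2))) :=
  {G | ∃ H1 H2, BCond H1 H2 ∧ G = comp2 H1 H2}

/-- `H2` is `H1`-minimal. -/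
def H1Minimal {k : ℕ} (H1 : SimpleGraph (Fin k)) (H2 : SimpleGraph (Fin k → Fin 2)) : Prop :=
  comp2 H1 H2 ∈ Bset k ∧
    ∀ H2' : SimpleGraph (Fin k → Fin 2), H2' < H2 → comp2 H1 H2' ∉ Bset k

/-- The graph `U_k` on `[2]^k`, with unique edge `{(1,…,1), (2,…,2)}`. -/
def Uk (k : ℕ) : SimpleGraph (Fin k → Fin 2) :=
  SimpleGraph.fromEdgeSet {s(fun _ => (0 : Fin 2), fun _ => (1 : Fin 2))}

/-- The graph `V_k` on `[2]^k`, whose edges join `(2,…,2)` to the tuples having exactly one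
entry equal to `1`. -/
def Vk (k : ℕ) : SimpleGraph (Fin k → Fin 2) :=
  SimpleGraph.fromEdgeSet
    {e | ∃ i : Fin k, e = s(Function.update (fun _ => (1 : Fin 2)) i 0, fun _ => (1 : Fin 2))}

/-- The graph `R_k` on `[2]^k`: the perfect matching pairing each tuple with its complement. -/
def Rk (k : ℕ) : SimpleGraph (Fin k → Fin 2) :=
  SimpleGraph.fromRel fun x y => ∀ i, x i ≠ y i

/-- The hypercube graph `Q_k` on `[2]^k`: tuples are adjacent when they differ in exactly one
coordinate. -/
def Qk (k : ℕ) : SimpleGraph (Fin k → Fin 2) :=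
  SimpleGraph.fromRel fun x y => ∃ i, x i ≠ y i ∧ ∀ j, j ≠ i → x j = y j

/-! ### The family `C_k`.
Tuples in `[3]^k` are modelled as functions `Fin k → Fin 3`, the `Fin 3`-value `j`
corresponding to the entry `j + 1 ∈ {1, 2, 3}`. -/

/-- Entries `a` and `b` (of `{1,2,3}`, coded in `Fin 3`) satisfy `|a - b| ≤ 1`. -/
def near3 (a b : Fin 3) : Prop := (a : ℕ) ≤ (b : ℕ) + 1 ∧ (b : ℕ) ≤ (a : ℕ) + 1

/-- `{x, y}` is an edge of the bipartite graph `C_i^k` (between `i`-th entry `1` and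
`i`-th entry `2`, with all other entries differing by at most `1`). -/
def CAdj {k : ℕ} (i : Fin k) (x y : Fin k → Fin 3) : Prop :=
  ((x i = 0 ∧ y i = 1) ∨ (x i = 1 ∧ y i = 0)) ∧ ∀ t, t ≠ i → near3 (x t) (y t)

/-- `{x, y}` is an edge of the bipartite graph `D_i^k` (between `i`-th entry `2` and
`i`-th entry `3`, with all other entries differing by at most `1`). -/
def DAdj {k : ℕ} (i : Fin k) (x y : Fin k → Fin 3) : Prop :=
  ((x i = 1 ∧ y i = 2) ∨ (x i = 2 ∧ y i = 1)) ∧ ∀ t, t ≠ i → near3 (x t) (y t)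

/-- The graph `K̄_[k] ∘ H2` on `[k] ⊔ [3]^k`. -/
def comp3 {k : ℕ} (H2 : SimpleGraph (Fin k → Fin 3)) :
    SimpleGraph (Fin k ⊕ (Fin k → Fin 3)) where
  Adj a b :=
    match a, b with
    | Sum.inl _, Sum.inl _ => False
    | Sum.inr x, Sum.inr y => H2.Adj x y
    | Sum.inl i, Sum.inr x => x i = 0
    | Sum.inr x, Sum.inl i => x i = 0
  symm := by
    refine ⟨?_⟩
    rintro (i | x) (j | y) h
    · exact h
    · exact h
    · exact h
    · exact H2.adj_symm h
  loopless := by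
    refine ⟨?_⟩
    rintro (i | x) h
    · exact h
    · exact H2.ne_of_adj h rfl

/-- The defining condition of `C_k`: every edge of `H2` lies in some `C_i^k` or `D_i^k`;
for each `i` the edges of `H2` in `C_i^k` cover `[3]^k_i(2)`, and the edges of `H2` in
`D_i^k` cover `S_i^k`. -/
def CCond {k : ℕ} (H2 : SimpleGraph (Fin k → Fin 3)) : Prop :=
  (∀ x y, H2.Adj x y → ∃ i, CAdj i x y ∨ DAdj i x y) ∧
  (∀ (i : Fin k) (x : Fin k → Fin 3), x i = 1 → ∃ y, H2.Adj x y ∧ CAdj i x y) ∧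
  (∀ (i : Fin k) (x : Fin k → Fin 3), x i = 2 → (∀ t, x t ≠ 0) →
    ∃ y, H2.Adj x y ∧ DAdj i x y)

/-- The family `C_k`, as a set of graphs on `[k] ⊔ [3]^k`. -/
def Cset (k : ℕ) : Set (SimpleGraph (Fin k ⊕ (Fin k → Fin 3))) :=
  {G | ∃ H2, CCond H2 ∧ G = comp3 H2}

/-- The graph `Γ_k` on `[3]^k`: distinct tuples are adjacent when all their entries differ
by at most `1`. -/
def GammaK (k : ℕ) : SimpleGraph (Fin k → Fin 3) :=
  SimpleGraph.fromRel fun x y => ∀ i, near3 (x i) (y i)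

/-- `H2` is `k`-minimal. -/
def KMinimalC {k : ℕ} (H2 : SimpleGraph (Fin k → Fin 3)) : Prop :=
  comp3 H2 ∈ Cset k ∧
    ∀ H2' : SimpleGraph (Fin k → Fin 3), H2' < H2 → comp3 H2' ∉ Cset k

/-!
Every edge of `H2` lies in some `C_i^k` or `D_i^k`, so its endpoints differ by at most `1` in
every coordinate: `H2` is a subgraph of `Γ_k`. The ordered adjacent pairs of `Γ_k` are the
`7^k` coordinatewise-near pairs minus the `3^k` diagonal ones, so `2 |E(Γ_k)| = 7^k - 3^k`,
and a subgraph has as many edges as `Γ_k` only if it is `Γ_k`.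
-/

open Finset

lemma SimpleGraph.card_edgeFinset_eq_iff_eq_of_le {V : Type*} {H G : SimpleGraph V}
    [Fintype H.edgeSet] [Fintype G.edgeSet] (hle : H ≤ G) :
    #H.edgeFinset = #G.edgeFinset ↔ H = G := by
  refine ⟨fun hcard => ?_, fun hHG => by subst hHG; congr; exact Subsingleton.elim _ _⟩
  exact edgeFinset_inj.mp (eq_of_subset_of_card_le (edgeFinset_mono hle) hcard.ge)

section PiRel

variable {ι α : Type*} [Fintype ι] [DecidableEq ι] [Fintype α]
  (r : α → α → Prop) [DecidableRel r]

lemma Fintype.card_subtype_forall_rel_pi :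
    Fintype.card {p : (ι → α) × (ι → α) // ∀ i, r (p.1 i) (p.2 i)} =
      Fintype.card {q : α × α // r q.1 q.2} ^ Fintype.card ι := by
  let e : {p : (ι → α) × (ι → α) // ∀ i, r (p.1 i) (p.2 i)} ≃
      (ι → {q : α × α // r q.1 q.2}) :=
    ((Equiv.arrowProdEquivProdArrow ι (fun _ => α) (fun _ => α)).symm.subtypeEquiv
      fun _ => Iff.rfl).trans (Equiv.subtypePiEquivPi (p := fun _ q => r q.1 q.2))
  rw [Fintype.card_congr e, Fintype.card_fun]

abbrev piRelGraph : SimpleGraph (ι → α) := fromRel fun x y => ∀ i, r (x i) (y i)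

lemma two_mul_card_edgeFinset_piRelGraph [DecidableEq α] (hrefl : ∀ a, r a a)
    (hsymm : ∀ a b, r a b → r b a) [DecidableRel (piRelGraph (ι := ι) r).Adj] :
    2 * #(piRelGraph (ι := ι) r).edgeFinset =
      Fintype.card {q : α × α // r q.1 q.2} ^ Fintype.card ι -
        Fintype.card α ^ Fintype.card ι := by
  have hadj : (univ.filter fun (x, y) => (piRelGraph (ι := ι) r).Adj x y) =
      (univ.filter fun p : (ι → α) × (ι → α) => ∀ i, r (p.1 i) (p.2 i)) \
        (univ : Finset (ι → α)).diag := by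
    ext ⟨x, y⟩
    simp only [fromRel_adj, mem_filter, mem_univ, true_and, mem_sdiff, mem_diag]
    exact ⟨fun ⟨hne, h⟩ => ⟨h.elim id fun h i => hsymm _ _ (h i), hne⟩,
      fun ⟨h, hne⟩ => ⟨hne, .inl h⟩⟩
  have hdiag : (univ : Finset (ι → α)).diag ⊆
      univ.filter fun p : (ι → α) × (ι → α) => ∀ i, r (p.1 i) (p.2 i) := by
    rintro ⟨x, y⟩ hxy
    simp only [mem_diag, mem_univ, true_and] at hxy
    subst hxy
    simpa using fun i => hrefl (x i)
  rw [two_mul_card_edgeFinset, hadj, card_sdiff_of_subset hdiag, diag_card, card_univ,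
    Fintype.card_fun, ← Fintype.card_subtype, Fintype.card_subtype_forall_rel_pi]

end PiRel

instance : DecidableRel near3 := fun _ _ => inferInstanceAs (Decidable (_ ∧ _))

lemma near3_refl (a : Fin 3) : near3 a a := ⟨Nat.le_succ _, Nat.le_succ _⟩

lemma near3_symm (a b : Fin 3) (h : near3 a b) : near3 b a := ⟨h.2, h.1⟩

lemma two_mul_card_edgeFinset_gammaK (k : ℕ) [DecidableRel (GammaK k).Adj] :
    2 * #(GammaK k).edgeFinset = 7 ^ k - 3 ^ k := by
  have hpairs : Fintype.card {q : Fin 3 × Fin 3 // near3 q.1 q.2} = 7 := by decide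
  have h := two_mul_card_edgeFinset_piRelGraph (ι := Fin k) near3 near3_refl near3_symm
  rw [hpairs, Fintype.card_fin, Fintype.card_fin] at h
  have hΓ : (GammaK k).edgeFinset = (piRelGraph near3).edgeFinset := edgeFinset_inj.mpr rfl
  rwa [hΓ]

lemma forall_near3_of_ne {k : ℕ} {i : Fin k} {x y : Fin k → Fin 3} (hi : near3 (x i) (y i))
    (h : ∀ t, t ≠ i → near3 (x t) (y t)) (t : Fin k) : near3 (x t) (y t) := by
  obtain rfl | ht := eq_or_ne t i
  exacts [hi, h t ht]

lemma CAdj.forall_near3 {k : ℕ} {i : Fin k} {x y : Fin k → Fin 3} (h : CAdj i x y) (t : Fin k) :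
    near3 (x t) (y t) := by
  refine forall_near3_of_ne ?_ h.2 t
  rcases h.1 with ⟨hx, hy⟩ | ⟨hx, hy⟩ <;> rw [hx, hy] <;> decide

lemma DAdj.forall_near3 {k : ℕ} {i : Fin k} {x y : Fin k → Fin 3} (h : DAdj i x y) (t : Fin k) :
    near3 (x t) (y t) := by
  refine forall_near3_of_ne ?_ h.2 t
  rcases h.1 with ⟨hx, hy⟩ | ⟨hx, hy⟩ <;> rw [hx, hy] <;> decide

lemma CCond.le_gammaK {k : ℕ} {H2 : SimpleGraph (Fin k → Fin 3)} (h : CCond H2) :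
    H2 ≤ GammaK k := by
  intro x y hxy
  obtain ⟨i, hC | hD⟩ := h.1 x y hxy
  exacts [(fromRel_adj _ _ _).mpr ⟨hxy.ne, .inl hC.forall_near3⟩,
    (fromRel_adj _ _ _).mpr ⟨hxy.ne, .inl hD.forall_near3⟩]

lemma comp3_injective (k : ℕ) : Function.Injective (comp3 (k := k)) := by
  intro H H' h
  ext x y
  exact iff_of_eq (congrArg (fun G => G.Adj (Sum.inr x) (Sum.inr y)) h)

theorem Cset_size_max_general (k : ℕ) (H2 : SimpleGraph (Fin k → Fin 3))
    [DecidableRel H2.Adj] (h : comp3 H2 ∈ Cset k) :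
    2 * H2.edgeFinset.card ≤ 7 ^ k - 3 ^ k ∧
    (2 * H2.edgeFinset.card = 7 ^ k - 3 ^ k ↔ H2 = GammaK k) := by
  classical
  obtain ⟨H, hH, hcomp⟩ := h
  have hle : H2 ≤ GammaK k := comp3_injective k hcomp ▸ hH.le_gammaK
  have hcard : #H2.edgeFinset ≤ #(GammaK k).edgeFinset := card_le_card (edgeFinset_mono hle)
  rw [← two_mul_card_edgeFinset_gammaK k, ← card_edgeFinset_eq_iff_eq_of_le hle]
  omega

/-- **Corollary.** If `K̄_[k] ∘ H2 ∈ C_k` (`k ≥ 2`), then `|E(H2)| ≤ (7^k − 3^k)/2`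
(equivalently `2 · |E(H2)| ≤ 7^k − 3^k`), with equality iff `H2 = Γ_k`. -/
theorem Cset_size_max (k : ℕ) (hk : 2 ≤ k) (H2 : SimpleGraph (Fin k → Fin 3))
    [DecidableRel H2.Adj] (h : comp3 H2 ∈ Cset k) :
    2 * H2.edgeFinset.card ≤ 7 ^ k - 3 ^ k ∧
    (2 * H2.edgeFinset.card = 7 ^ k - 3 ^ k ↔ H2 = GammaK k) :=
  Cset_size_max_general k H2 h
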